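/- Let R be a commutative ring whose prime spectrum Spec(R) is a Noetherian topological space. Then Spec(R[x]) is also a Noetherian topological space. Consequently, for any n, Spec(R[x_1,...,x_n]) is Noetherian. -/

import Mathlib

/-!
`Spec A` is Noetherian iff every ideal of `A` has the same radical as a finitely generated ideal.
If this fails in `R[X]`, Zorn gives an ideal `M` maximal among the failures; let
`m = M ∩ R`. If `M = m R[X]` then `M` is fine because `m` is. Otherwise take `f ∈ M` whose image
in `(R ⧸ m)[X]` is nonzero of least degree, with leading coefficient `b ∉ m`: pseudo-division by
`f` puts some `bˢ g` into `(f) + m R[X]` for every `g ∈ M`. By maximality `M + (b)` is fine, which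
yields a finitely generated `L ⊆ M` with `M ⊆ √(L + (b))`. Then every prime containing
`K = A R[X] + (f) + L` (with `A` finitely generated, `√A = √m`) contains `M`, whether or not it
contains `b`, so `√M = √K`.
-/

open Polynomial TopologicalSpace

namespace Ideal

variable {A B : Type*} [CommRing A] [CommRing B]

def IsRadicallyFG (I : Ideal A) : Prop :=
  ∃ J : Ideal A, J.FG ∧ J.radical = I.radical

theorem map_le_radical_map_of_radical_le (f : A →+* B) {I J : Ideal A}
    (h : I.radical ≤ J.radical) : I.map f ≤ (J.map f).radical :=
  calc I.map f ≤ I.radical.map f := map_mono le_radical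
    _ ≤ J.radical.map f := map_mono h
    _ ≤ (J.map f).radical := map_radical_le f

theorem IsRadicallyFG.map {I : Ideal A} (hI : I.IsRadicallyFG) (f : A →+* B) :
    (I.map f).IsRadicallyFG := by
  obtain ⟨J, hJ, hJI⟩ := hI
  refine ⟨J.map f, hJ.map f, le_antisymm ?_ ?_⟩ <;> rw [radical_le_radical_iff]
  exacts [map_le_radical_map_of_radical_le f hJI.le,
    map_le_radical_map_of_radical_le f hJI.ge]

theorem IsRadicallyFG.exists_mem_of_directedOn {c : Set (Ideal A)} (hne : c.Nonempty)
    (hc : DirectedOn (· ≤ ·) c) (h : (sSup c).IsRadicallyFG) : ∃ I ∈ c, I.IsRadicallyFG := by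
  obtain ⟨J, ⟨u, rfl⟩, hJ⟩ := h
  have hu : (u : Set A) ⊆ ⋃ I ∈ c, (I.radical : Set A) := by
    intro x hx
    obtain ⟨n, hn⟩ : x ∈ (sSup c).radical := hJ ▸ le_radical (subset_span hx)
    obtain ⟨I, hI, hxI⟩ := (Submodule.mem_sSup_of_directed hne hc).mp hn
    exact Set.mem_biUnion hI ⟨n, hxI⟩
  have hc' : DirectedOn (fun I J : Ideal A => (I.radical : Set A) ⊆ J.radical) c :=
    fun I hI J hJ =>
      let ⟨K, hK, hIK, hJK⟩ := hc I hI J hJ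
      ⟨K, hK, radical_mono hIK, radical_mono hJK⟩
  obtain ⟨I, hI, huI⟩ := DirectedOn.exists_mem_subset_of_finset_subset_biUnion hne hc' hu
  refine ⟨I, hI, span u, ⟨u, rfl⟩, le_antisymm ?_ ?_⟩
  · exact radical_le_radical_iff.mpr (span_le.mpr huI)
  · exact hJ ▸ radical_mono (le_sSup hI)

theorem exists_maximal_not_isRadicallyFG {I : Ideal A} (hI : ¬I.IsRadicallyFG) :
    ∃ M : Ideal A, Maximal (fun J => ¬J.IsRadicallyFG) M := by
  obtain ⟨M, -, hM⟩ := zorn_le_nonempty₀ {J : Ideal A | ¬J.IsRadicallyFG}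
    (fun c hc hchain J hJ => ⟨sSup c, fun h =>
      let ⟨_, hK, hKfg⟩ := h.exists_mem_of_directedOn ⟨J, hJ⟩ hchain.directedOn
      hc hK hKfg, fun _ => le_sSup⟩) I hI
  exact ⟨M, hM⟩

theorem le_radical_of_le_radical_sup_of_pow_mul_mem {I K : Ideal A} {b : A}
    (hb : I ≤ (K ⊔ span {b}).radical) (hsat : ∀ g ∈ I, ∃ s : ℕ, b ^ s * g ∈ K.radical) :
    I ≤ K.radical := by
  rw [radical_eq_sInf]
  refine le_sInf fun P ⟨hKP, hP⟩ g hg => ?_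
  by_cases hbP : b ∈ P
  · exact hP.radical_le_iff.mpr (sup_le hKP ((span_singleton_le_iff_mem _).mpr hbP))
      (hb hg)
  · obtain ⟨s, hs⟩ := hsat g hg
    exact (hP.mem_or_mem (hP.radical_le_iff.mpr hKP hs)).resolve_left
      (mt (hP.mem_of_pow_mem s) hbP)

theorem IsRadicallyFG.exists_fg_le_radical_sup {I : Ideal A} {b : A}
    (h : (I ⊔ span {b}).IsRadicallyFG) : ∃ L ≤ I, L.FG ∧ I ≤ (L ⊔ span {b}).radical := by
  obtain ⟨J, ⟨u, rfl⟩, hJ⟩ := h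
  have hu : ∀ x ∈ u, ∃ w ∈ I, ∃ n : ℕ, x ^ n - w ∈ span {b} := by
    intro x hx
    obtain ⟨n, hn⟩ : x ∈ (I ⊔ span {b}).radical := hJ ▸ le_radical (subset_span hx)
    obtain ⟨w, hw, t, ht, hwt⟩ := Submodule.mem_sup.mp hn
    exact ⟨w, hw, n, by rwa [← hwt, add_sub_cancel_left]⟩
  choose! w hw n hn using hu
  refine ⟨span (w '' u), span_le.mpr (Set.image_subset_iff.mpr hw),
    Submodule.fg_span (u.finite_toSet.image w), ?_⟩
  calc I ≤ (I ⊔ span {b}).radical := le_sup_left.trans le_radical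
    _ = (span u).radical := hJ.symm
    _ ≤ _ := radical_le_radical_iff.mpr <| span_le.mpr fun x hx => ⟨n x, ?_⟩
  rw [← add_sub_cancel (w x) (x ^ n x)]
  exact add_mem (mem_sup_left (subset_span ⟨x, hx, rfl⟩)) (mem_sup_right (hn x hx))

end Ideal

namespace PrimeSpectrum

theorem noetherianSpace_iff_forall_isRadicallyFG {A : Type*} [CommRing A] :
    NoetherianSpace (PrimeSpectrum A) ↔ ∀ I : Ideal A, I.IsRadicallyFG := by
  rw [noetherianSpace_iff_opens]
  refine ⟨fun h I => ?_, fun h U => ?_⟩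
  · obtain ⟨J, hJ, hJI⟩ := isCompact_isOpen_iff_ideal.mp
      ⟨h ⟨_, (isClosed_zeroLocus (I : Set A)).isOpen_compl⟩,
        (isClosed_zeroLocus _).isOpen_compl⟩
    exact ⟨J, hJ, zeroLocus_eq_iff.mp (compl_injective hJI)⟩
  · obtain ⟨s, hs⟩ := (isOpen_iff (U : Set (PrimeSpectrum A))).mp U.isOpen
    obtain ⟨J, hJ, hJs⟩ := h (Ideal.span s)
    refine (isCompact_isOpen_iff_ideal.mpr ⟨J, hJ, ?_⟩).1
    rw [zeroLocus_eq_iff.mpr hJs, zeroLocus_span, ← hs, compl_compl]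

end PrimeSpectrum

namespace Polynomial

open Ideal

section CommRing

variable {S : Type*} [CommRing S]

theorem exists_mem_ne_zero_forall_natDegree_le {Q : Ideal S[X]} (hQ : Q ≠ ⊥) :
    ∃ f ∈ Q, f ≠ 0 ∧ ∀ g ∈ Q, g ≠ 0 → f.natDegree ≤ g.natDegree := by
  classical
  have hex : ∃ n, ∃ g ∈ Q, g ≠ 0 ∧ g.natDegree = n :=
    let ⟨g, hg, hg0⟩ := Submodule.exists_mem_ne_zero_of_ne_bot hQ
    ⟨_, g, hg, hg0, rfl⟩
  obtain ⟨f, hf, hf0, hfn⟩ := Nat.find_spec hex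
  exact ⟨f, hf, hf0, fun g hg hg0 => hfn ▸ Nat.find_min' hex ⟨g, hg, hg0, rfl⟩⟩

theorem exists_C_leadingCoeff_pow_mul_mem_span {Q : Ideal S[X]} {f : S[X]} (hf : f ∈ Q)
    (hmin : ∀ g ∈ Q, g ≠ 0 → f.natDegree ≤ g.natDegree) {g : S[X]} (hg : g ∈ Q) :
    ∃ s : ℕ, C f.leadingCoeff ^ s * g ∈ span {f} := by
  induction hn : g.natDegree using Nat.strong_induction_on generalizing g with
  | _ n ih =>
  by_cases hg0 : g = 0
  · exact ⟨0, by simp [hg0]⟩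
  have hfg := hmin g hg hg0
  rcases Nat.eq_zero_or_pos n with rfl | hpos
  · have hf0 : f.natDegree = 0 := Nat.le_zero.mp (hn ▸ hfg)
    refine ⟨1, mem_span_singleton.mpr ⟨g, ?_⟩⟩
    rw [pow_one, leadingCoeff, hf0, ← eq_C_of_natDegree_eq_zero hf0]
  have hlt := natDegree_cancelLeads_lt_of_natDegree_le_natDegree hfg (hn ▸ hpos)
  have hcancel : f.cancelLeads g ∈ Q := sub_mem (Q.mul_mem_left _ hg) (Q.mul_mem_left _ hf)
  obtain ⟨s, hs⟩ := ih _ (hn ▸ hlt) hcancel rfl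
  refine ⟨s + 1, ?_⟩
  have : C f.leadingCoeff ^ (s + 1) * g = C f.leadingCoeff ^ s * f.cancelLeads g +
      C f.leadingCoeff ^ s * C g.leadingCoeff * X ^ (g.natDegree - f.natDegree) * f := by
    rw [cancelLeads, Nat.sub_eq_zero_of_le hfg]
    ring
  rw [this]
  exact add_mem hs (mul_mem_left _ _ (mem_span_singleton_self f))

end CommRing

variable {R : Type*} [CommRing R]

theorem exists_pow_mul_mem_span_sup_map_C {M : Ideal R[X]} {m : Ideal R}
    (hM : ¬M ≤ m.map C) :
    ∃ f ∈ M, ∃ b ∉ m, ∀ g ∈ M, ∃ s : ℕ, C b ^ s * g ∈ span {f} ⊔ m.map C := by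
  set φ : R[X] →+* (R ⧸ m)[X] := mapRingHom (Ideal.Quotient.mk m)
  have hφ : Function.Surjective φ := map_surjective _ Ideal.Quotient.mk_surjective
  have hker : RingHom.ker φ = m.map C := by rw [ker_mapRingHom, mk_ker]
  have hQ : M.map φ ≠ ⊥ := by rwa [Ne, map_eq_bot_iff_le_ker, hker]
  obtain ⟨f', hf'Q, hf'0, hmin⟩ := exists_mem_ne_zero_forall_natDegree_le hQ
  obtain ⟨f, hfM, rfl⟩ := (mem_map_iff_of_surjective φ hφ).mp hf'Q
  set b := f.coeff (φ f).natDegree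
  have hb : C (Ideal.Quotient.mk m b) = φ (C b) := by simp [φ]
  have hlead : (φ f).leadingCoeff = Ideal.Quotient.mk m b := coeff_map _ _
  refine ⟨f, hfM, b, fun hbm => hf'0 ?_, fun g hg => ?_⟩
  · rwa [← leadingCoeff_eq_zero, hlead, Ideal.Quotient.eq_zero_iff_mem]
  obtain ⟨s, hs⟩ := exists_C_leadingCoeff_pow_mul_mem_span hf'Q hmin (mem_map_of_mem φ hg)
  refine ⟨s, ?_⟩
  rw [hlead, hb, ← map_pow, ← map_mul, ← Set.image_singleton, ← map_span] at hs
  rwa [← hker, ← comap_map_of_surjective' φ hφ]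

theorem isRadicallyFG_of_isRadicallyFG_sup_C {M : Ideal R[X]}
    (hm : (M.comap C).IsRadicallyFG) (hsup : ∀ b ∉ M.comap C, (M ⊔ span {C b}).IsRadicallyFG) :
    M.IsRadicallyFG := by
  set m := M.comap C
  by_cases hMm : M ≤ m.map C
  · exact le_antisymm hMm map_comap_le ▸ hm.map C
  obtain ⟨f, hfM, b, hbm, hsat⟩ := exists_pow_mul_mem_span_sup_map_C hMm
  obtain ⟨L, hLM, hL, hML⟩ := (hsup b hbm).exists_fg_le_radical_sup
  obtain ⟨A, hA, hAm⟩ := hm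
  set K := A.map C ⊔ span {f} ⊔ L
  have hmK : m.map C ≤ K.radical :=
    (map_le_radical_map_of_radical_le C hAm.ge).trans
      (radical_mono (le_sup_left.trans le_sup_left))
  have hKM : K ≤ M.radical := by
    refine sup_le (sup_le ?_ ?_) (hLM.trans le_radical)
    · exact (map_le_radical_map_of_radical_le C hAm.le).trans (radical_mono map_comap_le)
    · exact (span_singleton_le_iff_mem _).mpr (le_radical hfM)
  have hMK : M ≤ K.radical := by
    refine le_radical_of_le_radical_sup_of_pow_mul_mem (b := C b)
      (hML.trans (radical_mono (sup_le_sup_right le_sup_right _))) fun g hg => ?_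
    obtain ⟨s, hs⟩ := hsat g hg
    exact ⟨s, sup_le (le_sup_right.trans (le_sup_left.trans le_radical)) hmK hs⟩
  exact ⟨K, Submodule.FG.sup (Submodule.FG.sup (hA.map C) ⟨{f}, by simp⟩) hL,
    le_antisymm (radical_le_radical_iff.mpr hKM) (radical_le_radical_iff.mpr hMK)⟩

theorem forall_isRadicallyFG (hR : ∀ I : Ideal R, I.IsRadicallyFG) (I : Ideal R[X]) :
    I.IsRadicallyFG := by
  by_contra hI
  obtain ⟨M, hM⟩ := exists_maximal_not_isRadicallyFG hI
  refine hM.prop (isRadicallyFG_of_isRadicallyFG_sup_C (hR _) fun b hb => ?_)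
  exact of_not_not (hM.not_prop_of_gt (Submodule.lt_sup_iff_notMem.mpr hb))

end Polynomial

namespace PrimeSpectrum

variable (R : Type*) [CommRing R] [NoetherianSpace (PrimeSpectrum R)]

instance noetherianSpace_polynomial : NoetherianSpace (PrimeSpectrum R[X]) :=
  noetherianSpace_iff_forall_isRadicallyFG.mpr <|
    Polynomial.forall_isRadicallyFG (noetherianSpace_iff_forall_isRadicallyFG.mp ‹_›)

theorem noetherianSpace_mvPolynomial_fin (n : ℕ) :
    NoetherianSpace (PrimeSpectrum (MvPolynomial (Fin n) R)) := by
  induction n with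
  | zero => exact (noetherianSpace_iff_of_homeomorph
      (homeomorphOfRingEquiv (MvPolynomial.isEmptyRingEquiv R (Fin 0)).symm)).mp ‹_›
  | succ n ih => exact (noetherianSpace_iff_of_homeomorph
      (homeomorphOfRingEquiv (MvPolynomial.finSuccEquiv R n).toRingEquiv.symm)).mp inferInstance

instance noetherianSpace_mvPolynomial (σ : Type*) [Finite σ] :
    NoetherianSpace (PrimeSpectrum (MvPolynomial σ R)) := by
  obtain ⟨n, ⟨e⟩⟩ := Finite.exists_equiv_fin σ
  exact (noetherianSpace_iff_of_homeomorph
    (homeomorphOfRingEquiv (MvPolynomial.renameEquiv R e.symm).toRingEquiv)).mp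
    (noetherianSpace_mvPolynomial_fin R n)

end PrimeSpectrum

theorem primeSpectrum_polynomial_noetherianSpace (R : Type*) [CommRing R]
    (h : TopologicalSpace.NoetherianSpace (PrimeSpectrum R)) :
    TopologicalSpace.NoetherianSpace (PrimeSpectrum (Polynomial R)) ∧
      ∀ n : ℕ, TopologicalSpace.NoetherianSpace
        (PrimeSpectrum (MvPolynomial (Fin n) R)) :=
  ⟨PrimeSpectrum.noetherianSpace_polynomial R,
    fun n => PrimeSpectrum.noetherianSpace_mvPolynomial R (Fin n)⟩
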